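/- arXiv:1910.00431 — 6 statements merged into one kernel-verified Lean document; each statement's English description precedes it below -/
import Mathlib

section
/- For integers n ≥ 1, n* with 1 ≤ n* ≤ n−1, one has ∑_{s=0}^{n-1-n*} (n+1-n*-s) · C(n*-1+s, n*-1) = (n+n*+1)·(n-1)! / ((n-n*-1)! · (n*+1)!). -/
/-- Hockey-stick identity (shifted form). -/
lemma urn_hockey (j k : ℕ) : ∀ m : ℕ,
    ∑ s ∈ Finset.range m, Nat.choose (k + s) (k + j) = Nat.choose (k + m) (k + j + 1) := by
  intro m
  induction m with
  | zero => simp [Nat.choose_eq_zero_of_lt (by omega : k < k + j + 1)]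
  | succ m ih =>
    rw [Finset.sum_range_succ, ih, show k + (m + 1) = (k + m) + 1 by ring,
      Nat.choose_succ_succ' (k + m) (k + j)]
    ring

/-- Combinatorial identity:
`∑_{s=0}^{n-1-k} (n+1-k-s)·C(k-1+s, k-1) = (n+k+1)(n-1)! / ((n-k-1)!(k+1)!)`
for `1 ≤ k ≤ n-1`. -/
theorem urn_sum_identity (n k : ℕ) (hk : 1 ≤ k) (hkn : k ≤ n - 1) (hn : 1 ≤ n) :
    ∑ s ∈ Finset.range (n - k),
      ((n : ℝ) + 1 - k - s) * (Nat.choose (k - 1 + s) (k - 1) : ℝ)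
      = ((n : ℝ) + k + 1) * (Nat.factorial (n - 1) : ℝ) /
        ((Nat.factorial (n - k - 1) : ℝ) * (Nat.factorial (k + 1) : ℝ)) := by
  obtain ⟨k', rfl⟩ : ∃ k', k = k' + 1 := ⟨k - 1, by omega⟩
  obtain ⟨m', rfl⟩ : ∃ m', n = k' + 1 + (m' + 1) := ⟨n - k' - 2, by omega⟩
  have h1 : k' + 1 + (m' + 1) - (k' + 1) = m' + 1 := by omega
  have h2 : k' + 1 + (m' + 1) - 1 = k' + m' + 1 := by omega
  have h3 : m' + 1 - 1 = m' := by omega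
  have h4 : k' + 1 - 1 = k' := by omega
  rw [h1, h2, h3, h4]
  -- the summand coefficient as a real
  have hcoef : ∀ s ∈ Finset.range (m' + 1),
      (((k' + 1 + (m' + 1) : ℕ) : ℝ) + 1 - ((k' + 1 : ℕ) : ℝ) - (s : ℝ))
        * (Nat.choose (k' + s) k' : ℝ)
      = ((m' : ℝ) + 2) * (Nat.choose (k' + s) k' : ℝ)
        - (s : ℝ) * (Nat.choose (k' + s) k' : ℝ) := by
    intro s _
    push_cast
    ring
  rw [Finset.sum_congr rfl hcoef, Finset.sum_sub_distrib, ← Finset.mul_sum]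
  -- sum A
  have hA : ∑ s ∈ Finset.range (m' + 1), Nat.choose (k' + s) k'
      = Nat.choose (k' + (m' + 1)) (k' + 1) := by
    simpa using urn_hockey 0 k' (m' + 1)
  -- sum B
  have hB : ∑ s ∈ Finset.range (m' + 1), s * Nat.choose (k' + s) k'
      = (k' + 1) * Nat.choose (k' + (m' + 1)) (k' + 2) := by
    have hterm : ∀ s ∈ Finset.range (m' + 1),
        s * Nat.choose (k' + s) k' = (k' + 1) * Nat.choose (k' + s) (k' + 1) := by
      intro s _
      have h := Nat.choose_succ_right_eq (k' + s) k'
      rw [Nat.add_sub_cancel_left] at h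
      rw [mul_comm, ← h, mul_comm]
    rw [Finset.sum_congr rfl hterm, ← Finset.mul_sum]
    have := urn_hockey 1 k' (m' + 1)
    rw [show k' + 1 + 1 = k' + 2 by ring] at this
    rw [this]
  have hA' : ∑ s ∈ Finset.range (m' + 1), (Nat.choose (k' + s) k' : ℝ)
      = (Nat.choose (k' + m' + 1) (k' + 1) : ℝ) := by
    rw [← Nat.cast_sum, hA]; norm_num [show k' + (m' + 1) = k' + m' + 1 by ring]
  have hB' : ∑ s ∈ Finset.range (m' + 1), (s : ℝ) * (Nat.choose (k' + s) k' : ℝ)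
      = ((k' : ℝ) + 1) * (Nat.choose (k' + m' + 1) (k' + 2) : ℝ) := by
    have := congrArg (Nat.cast : ℕ → ℝ) hB
    push_cast at this
    rw [show k' + (m' + 1) = k' + m' + 1 by ring] at this
    exact this
  rw [hA', hB']
  -- now pure algebra with binomials and factorials
  have hc : (Nat.choose (k' + m' + 1) (k' + 2) : ℝ) * ((k' : ℝ) + 2)
      = (Nat.choose (k' + m' + 1) (k' + 1) : ℝ) * (m' : ℝ) := by
    have h := Nat.choose_succ_right_eq (k' + m' + 1) (k' + 1)
    rw [show k' + m' + 1 - (k' + 1) = m' by omega] at h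
    rw [show k' + 1 + 1 = k' + 2 by ring] at h
    have := congrArg (Nat.cast : ℕ → ℝ) h
    push_cast at this
    linarith
  have hf : (Nat.choose (k' + m' + 1) (k' + 1) : ℝ) * (Nat.factorial (k' + 1) : ℝ)
      * (Nat.factorial m' : ℝ) = (Nat.factorial (k' + m' + 1) : ℝ) := by
    have h := Nat.choose_mul_factorial_mul_factorial
      (show k' + 1 ≤ k' + m' + 1 by omega)
    rw [show k' + m' + 1 - (k' + 1) = m' by omega] at h
    exact_mod_cast congrArg (Nat.cast : ℕ → ℝ) h
  have hfac : (Nat.factorial (k' + 1 + 1) : ℝ)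
      = ((k' : ℝ) + 2) * (Nat.factorial (k' + 1) : ℝ) := by
    rw [Nat.factorial_succ]; push_cast; ring
  have hm : (Nat.factorial m' : ℝ) ≠ 0 := by positivity
  have hk1 : (Nat.factorial (k' + 1) : ℝ) ≠ 0 := by positivity
  rw [hfac, eq_div_iff (by positivity)]
  push_cast
  linear_combination (-(((k' : ℝ) + 1) * (Nat.factorial m' : ℝ) * (Nat.factorial (k' + 1) : ℝ))) * hc + ((m' : ℝ) + 2 * (k' : ℝ) + 4) * hf
end

section
/- Let X ~ bin(m, p) and a > 0. Then 1/(a + m·p) ≤ E[1/(a + X)] ≤ (a + 1 − p)/(a·(a + 1 + (m−1)·p)). -/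
lemma binom_inv_rec (p a : ℝ) (m : ℕ) :
    (∑ k ∈ Finset.range (m + 2),
        (Nat.choose (m+1) k : ℝ) * p ^ k * (1 - p) ^ (m + 1 - k) / (a + k))
    = (1 - p) * (∑ k ∈ Finset.range (m + 1),
        (Nat.choose m k : ℝ) * p ^ k * (1 - p) ^ (m - k) / (a + k))
      + p * (∑ k ∈ Finset.range (m + 1),
        (Nat.choose m k : ℝ) * p ^ k * (1 - p) ^ (m - k) / ((a + 1) + k)) := by
  rw [Finset.sum_range_succ' _ (m+1)]
  have hpascal : ∀ k ∈ Finset.range (m+1),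
      (Nat.choose (m+1) (k+1) : ℝ) * p ^ (k+1) * (1 - p) ^ (m + 1 - (k+1)) / (a + ↑(k+1))
      = (Nat.choose m (k+1) : ℝ) * p ^ (k+1) * (1 - p) ^ (m - (k+1)) * (1-p) / (a + ↑(k+1))
        + p * ((Nat.choose m k : ℝ) * p ^ k * (1 - p) ^ (m - k) / ((a+1) + k)) := by
    intro k hk
    rw [Finset.mem_range] at hk
    have h1 : m + 1 - (k+1) = m - k := by omega
    rw [Nat.choose_succ_succ', h1]
    push_cast
    have hk2 : (a + ((k:ℝ) + 1)) = ((a+1) + (k:ℝ)) := by ring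
    rcases Nat.lt_or_ge (k+1) (m+1) with h | h
    · have h2 : m - k = (m - (k+1)) + 1 := by omega
      rw [hk2, h2]
      ring
    · have hc0 : ((Nat.choose m (k+1)) : ℝ) = 0 := by
        rw [Nat.choose_eq_zero_of_lt (by omega)]; norm_num
      rw [hc0, hk2]
      ring
  rw [Finset.sum_congr rfl hpascal, Finset.sum_add_distrib, ← Finset.mul_sum]
  have key : (∑ k ∈ Finset.range (m+1),
      (Nat.choose m (k+1) : ℝ) * p ^ (k+1) * (1 - p) ^ (m - (k+1)) * (1-p) / (a + ↑(k+1)))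
      + (Nat.choose (m+1) 0 : ℝ) * p ^ 0 * (1 - p) ^ (m + 1 - 0) / (a + ((0:ℕ):ℝ))
      = (1 - p) * (∑ k ∈ Finset.range (m + 1),
        (Nat.choose m k : ℝ) * p ^ k * (1 - p) ^ (m - k) / (a + k)) := by
    rw [Finset.sum_range_succ]
    rw [Finset.sum_range_succ' _ m]
    rw [mul_add, Finset.mul_sum]
    have hgm : ((Nat.choose m (m+1)) : ℝ) = 0 := by
      rw [Nat.choose_eq_zero_of_lt (by omega)]; norm_num
    rw [hgm]
    have hsum : (∑ k ∈ Finset.range m,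
        (Nat.choose m (k+1) : ℝ) * p ^ (k+1) * (1 - p) ^ (m - (k+1)) * (1-p) / (a + ↑(k+1)))
        = ∑ k ∈ Finset.range m,
          (1-p) * ((Nat.choose m (k+1) : ℝ) * p ^ (k+1) * (1 - p) ^ (m - (k+1)) / (a + ↑(k+1))) := by
      apply Finset.sum_congr rfl
      intro k _
      ring
    rw [hsum]
    simp only [Nat.choose_zero_right, Nat.cast_one, pow_zero, Nat.cast_zero, add_zero,
      Nat.sub_zero, Nat.choose_succ_self]
    rw [pow_succ]
    ring
  linarith [key]

lemma step_lower (p x : ℝ) (hp0 : 0 < p) (hp1 : p < 1) (hx : 0 < x) :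
    1 / (x + p) ≤ (1 - p) * (1 / x) + p * (1 / (x + 1)) := by
  have h : (1 - p) * (1 / x) + p * (1 / (x + 1)) = (x + 1 - p) / (x * (x+1)) := by
    field_simp; ring
  rw [h, div_le_div_iff₀ (by positivity) (by positivity)]
  nlinarith [mul_pos (mul_pos hx hp0) (sub_pos.mpr hp1)]

lemma step_upper (p a c : ℝ) (hp0 : 0 < p) (hp1 : p < 1) (ha : 0 < a) (hc : -p ≤ c) :
    (1 - p) * ((a + 1 - p) / (a * (a + 1 + c)))
      + p * ((a + 1 + 1 - p) / ((a + 1) * (a + 1 + 1 + c)))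
    ≤ (a + 1 - p) / (a * (a + 1 + c + p)) := by
  have h1 : (0:ℝ) < a + 1 + c := by linarith
  have h2 : (0:ℝ) < a + 1 + 1 + c := by linarith
  have h3 : (0:ℝ) < a + 1 + c + p := by linarith
  have h4 : (0:ℝ) < a + 1 := by linarith
  have h : (1 - p) * ((a + 1 - p) / (a * (a + 1 + c)))
      + p * ((a + 1 + 1 - p) / ((a + 1) * (a + 1 + 1 + c)))
      = ((1-p) * (a + 1 - p) * ((a+1) * (a+1+1+c)) + p * (a+1+1-p) * (a * (a+1+c)))
        / ((a * (a+1+c)) * ((a+1) * (a+1+1+c))) := by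
    field_simp
  rw [h, div_le_div_iff₀ (by positivity) (by positivity)]
  nlinarith [mul_nonneg (mul_nonneg (mul_nonneg (mul_pos ha hp0).le
      (by linarith : (0:ℝ) ≤ 1 - p)) (by linarith : (0:ℝ) ≤ c + p))
      (by linarith : (0:ℝ) ≤ 2*a + c + 2)]

lemma binom_inv_main (p : ℝ) (hp0 : 0 < p) (hp1 : p < 1) :
    ∀ m : ℕ, ∀ a : ℝ, 0 < a →
      1 / (a + m * p) ≤
        (∑ k ∈ Finset.range (m + 1),
          (Nat.choose m k : ℝ) * p ^ k * (1 - p) ^ (m - k) / (a + k))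
      ∧ (∑ k ∈ Finset.range (m + 1),
          (Nat.choose m k : ℝ) * p ^ k * (1 - p) ^ (m - k) / (a + k))
        ≤ (a + 1 - p) / (a * (a + 1 + ((m : ℝ) - 1) * p)) := by
  intro m
  induction m with
  | zero =>
    intro a ha
    have hq : 0 < a + 1 - p := by linarith
    have hsum : (∑ k ∈ Finset.range (0 + 1),
        (Nat.choose 0 k : ℝ) * p ^ k * (1 - p) ^ (0 - k) / (a + k)) = 1 / a := by
      simp
    rw [hsum]
    constructor
    · simp
    · have : (a + 1 - p) / (a * (a + 1 + ((0:ℕ) - 1 : ℝ) * p)) = 1 / a := by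
        push_cast
        rw [show a * (a + 1 + (0 - 1) * p) = a * (a + 1 - p) by ring]
        rw [div_mul_eq_div_div_swap, div_self (ne_of_gt hq)]
      rw [this]
  | succ m ih =>
    intro a ha
    have ih1 := ih a ha
    have ih2 := ih (a+1) (by linarith)
    rw [binom_inv_rec p a m]
    have hx : 0 < a + m * p := by positivity
    constructor
    · have hl := step_lower p (a + m * p) hp0 hp1 hx
      have e1 : 1 / (a + ((m:ℕ)+1 : ℕ) * p) = 1 / ((a + m * p) + p) := by
        push_cast; ring_nf
      rw [e1]
      have hb1 : (1 - p) * (1 / (a + m * p)) ≤ (1 - p) * (∑ k ∈ Finset.range (m + 1),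
          (Nat.choose m k : ℝ) * p ^ k * (1 - p) ^ (m - k) / (a + k)) :=
        mul_le_mul_of_nonneg_left ih1.1 (by linarith)
      have e2 : (a + m * p) + 1 = (a + 1) + m * p := by ring
      have hb2 : p * (1 / ((a + m * p) + 1)) ≤ p * (∑ k ∈ Finset.range (m + 1),
          (Nat.choose m k : ℝ) * p ^ k * (1 - p) ^ (m - k) / ((a + 1) + k)) := by
        rw [e2]
        exact mul_le_mul_of_nonneg_left ih2.1 hp0.le
      linarith
    · have hu := step_upper p a (((m:ℝ) - 1) * p) hp0 hp1 ha
        (by nlinarith [Nat.cast_nonneg (α := ℝ) m])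
      have e3 : (a + 1 - p) / (a * (a + 1 + (((m:ℕ)+1 : ℕ) - 1 : ℝ) * p))
          = (a + 1 - p) / (a * (a + 1 + ((m:ℝ) - 1) * p + p)) := by
        push_cast; ring_nf
      rw [e3]
      have hb1 : (1 - p) * (∑ k ∈ Finset.range (m + 1),
          (Nat.choose m k : ℝ) * p ^ k * (1 - p) ^ (m - k) / (a + k))
          ≤ (1 - p) * ((a + 1 - p) / (a * (a + 1 + ((m:ℝ) - 1) * p))) :=
        mul_le_mul_of_nonneg_left ih1.2 (by linarith)
      have hb2 : p * (∑ k ∈ Finset.range (m + 1),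
          (Nat.choose m k : ℝ) * p ^ k * (1 - p) ^ (m - k) / ((a + 1) + k))
          ≤ p * ((a + 1 + 1 - p) / ((a + 1) * (a + 1 + 1 + ((m:ℝ) - 1) * p))) :=
        mul_le_mul_of_nonneg_left ih2.2 hp0.le
      linarith

/-- Inverse-moment bounds for a binomial random variable `X ~ bin(m,p)` and
`a > 0`:  `1/(a+mp) ≤ E[1/(a+X)] ≤ (a+1-p)/(a(a+1+(m-1)p))`. -/
theorem binomial_inverse_moment_bounds (m : ℕ) (p a : ℝ)
    (hp : p ∈ Set.Ioo (0:ℝ) 1) (ha : 0 < a) :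
    1 / (a + m * p) ≤
      (∑ k ∈ Finset.range (m + 1),
        (Nat.choose m k : ℝ) * p ^ k * (1 - p) ^ (m - k) / (a + k))
    ∧ (∑ k ∈ Finset.range (m + 1),
        (Nat.choose m k : ℝ) * p ^ k * (1 - p) ^ (m - k) / (a + k))
      ≤ (a + 1 - p) / (a * (a + 1 + ((m : ℝ) - 1) * p)) := by
  exact binom_inv_main p hp.1 hp.2 m a ha
end

section
/- Let p̃_{t+1} = ((n_e − n*)·(1−s)^t + n*) / (n·(1−s)^t − ((1−s)/s)·(1 − (1−s)^t)), for s ∈ (0,1), n > 0, 0 < n* ≤ n_e ≤ n. Viewed as a function of real t ≥ 0, p̃_{t+1} is strictly increasing and convex on the interval [0, t⁽²⁾) where t⁽²⁾ = log(n·s/(1−s) + 1)/log(1/(1−s)) is the time at which the denominator vanishes. -/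
/-!
Write `q = 1 - s`, `c = q / s` and `b = n + c`. The denominator is `b q^t - c`, positive exactly
for `t < t⁽²⁾`, and partial fractions give `p̃ = (ne - k) / b + K / (b q^t - c)` with `K > 0`.
So it suffices to treat `h t = (b q^t - c)⁻¹`. It solves the Riccati equation
`h' = φ(h)` with `φ(y) = -log q * (y + c y²)`, and `φ` is positive and increasing for `y > 0`;
hence `h' > 0` and `h'' = φ'(h) h' > 0`.
-/

open Real Set

lemma convexOn_of_hasDerivAt_comp {U : Set ℝ} (hU : IsOpen U) (hUc : Convex ℝ U)
    {h φ φ' : ℝ → ℝ} (hh : ∀ t ∈ U, HasDerivAt h (φ (h t)) t)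
    (hφ : ∀ t ∈ U, HasDerivAt φ (φ' (h t)) (h t))
    (hφ₀ : ∀ t ∈ U, 0 ≤ φ (h t)) (hφ'₀ : ∀ t ∈ U, 0 ≤ φ' (h t)) : ConvexOn ℝ U h := by
  refine convexOn_of_hasDerivWithinAt2_nonneg hUc (f' := φ ∘ h)
    (f'' := fun t => φ' (h t) * φ (h t))
    (fun t ht => (hh t ht).continuousAt.continuousWithinAt)
    (fun t ht => ?_) (fun t ht => ?_) (fun t ht => ?_) <;> rw [hU.interior_eq] at ht
  · exact (hh t ht).hasDerivWithinAt
  · exact ((hφ t ht).comp t (hh t ht)).hasDerivWithinAt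
  · exact mul_nonneg (hφ'₀ t ht) (hφ₀ t ht)

section InvMulRpowSub

variable {q b c : ℝ}

lemma mul_rpow_sub_pos (hq0 : 0 < q) (hq1 : q < 1) (hb : 0 < b) (hc : 0 < c) {t : ℝ}
    (ht : t < logb (1 / q) (b / c)) : 0 < b * q ^ t - c := by
  have hq1' : 1 < 1 / q := by rw [lt_div_iff₀ hq0]; linarith
  have hlt : (1 / q) ^ t < b / c := by
    rwa [← rpow_lt_rpow_left_iff hq1', rpow_logb (by linarith) hq1'.ne' (by positivity)] at ht
  rw [div_rpow zero_le_one hq0.le, one_rpow, div_lt_div_iff₀ (rpow_pos_of_pos hq0 t) hc] at hlt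
  linarith

lemma hasDerivAt_inv_mul_rpow_sub (hq0 : 0 < q) {t : ℝ} (ht : b * q ^ t - c ≠ 0) :
    HasDerivAt (fun t => (b * q ^ t - c)⁻¹)
      (-log q * ((b * q ^ t - c)⁻¹ + c * (b * q ^ t - c)⁻¹ ^ 2)) t := by
  refine (((hasStrictDerivAt_const_rpow hq0 t).hasDerivAt.const_mul b).sub_const c).inv ht
    |>.congr_deriv ?_
  field_simp
  ring

lemma strictMonoOn_inv_mul_rpow_sub (hq0 : 0 < q) (hq1 : q < 1) (hb : 0 < b) (hc : 0 < c) :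
    StrictMonoOn (fun t => (b * q ^ t - c)⁻¹) (Iio (logb (1 / q) (b / c))) := by
  have hD t (ht : t ∈ Iio (logb (1 / q) (b / c))) := mul_rpow_sub_pos hq0 hq1 hb hc ht
  have hlog : 0 < -log q := neg_pos.2 (log_neg hq0 hq1)
  refine strictMonoOn_of_hasDerivWithinAt_pos (convex_Iio _)
    (f' := fun t => -log q * ((b * q ^ t - c)⁻¹ + c * (b * q ^ t - c)⁻¹ ^ 2))
    (fun t ht => (hasDerivAt_inv_mul_rpow_sub hq0 (hD t ht).ne').continuousAt.continuousWithinAt)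
    (fun t ht => ?_) (fun t ht => ?_) <;> rw [interior_Iio] at ht
  · exact (hasDerivAt_inv_mul_rpow_sub hq0 (hD t ht).ne').hasDerivWithinAt
  · have := hD t ht
    positivity

lemma convexOn_inv_mul_rpow_sub (hq0 : 0 < q) (hq1 : q < 1) (hb : 0 < b) (hc : 0 < c) :
    ConvexOn ℝ (Iio (logb (1 / q) (b / c))) (fun t => (b * q ^ t - c)⁻¹) := by
  have hD t (ht : t ∈ Iio (logb (1 / q) (b / c))) := mul_rpow_sub_pos hq0 hq1 hb hc ht
  have hlog : 0 < -log q := neg_pos.2 (log_neg hq0 hq1)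
  refine convexOn_of_hasDerivAt_comp isOpen_Iio (convex_Iio _)
    (φ := fun y => -log q * (y + c * y ^ 2)) (φ' := fun y => -log q * (1 + c * (2 * y)))
    (fun t ht => hasDerivAt_inv_mul_rpow_sub hq0 (hD t ht).ne')
    (fun t _ => ?_) (fun t ht => ?_) (fun t ht => ?_)
  · exact (((hasDerivAt_id _).add ((hasDerivAt_pow 2 _).const_mul c)).const_mul _).congr_deriv
      (by simp)
  all_goals have := hD t ht; positivity

end InvMulRpowSub

theorem sss_conditional_prob_convex_increasing_general (s n k ne : ℝ)
    (hs : s ∈ Set.Ioo (0:ℝ) 1) (hn : 0 < n) (hk : 0 < k) (hkne : k ≤ ne) :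
    StrictMonoOn
      (fun t : ℝ => ((ne - k) * (1 - s) ^ t + k) /
        (n * (1 - s) ^ t - ((1 - s) / s) * (1 - (1 - s) ^ t)))
      (Set.Ico (0:ℝ) (Real.log (n * s / (1 - s) + 1) / Real.log (1 / (1 - s))))
    ∧ ConvexOn ℝ
      (Set.Ico (0:ℝ) (Real.log (n * s / (1 - s) + 1) / Real.log (1 / (1 - s))))
      (fun t : ℝ => ((ne - k) * (1 - s) ^ t + k) /
        (n * (1 - s) ^ t - ((1 - s) / s) * (1 - (1 - s) ^ t))) := by
  obtain ⟨hs0, hs1⟩ := hs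
  set q := 1 - s
  set c := q / s
  have hq0 : 0 < q := sub_pos.2 hs1
  have hq1 : q < 1 := by linarith
  have hc : 0 < c := div_pos hq0 hs0
  have hb : 0 < n + c := by positivity
  have hT : log (n * s / q + 1) / log (1 / q) = logb (1 / q) ((n + c) / c) := by
    rw [logb, add_div, div_self hc.ne', div_div_eq_mul_div, mul_div_assoc]
  have hsub : Ico 0 (log (n * s / q + 1) / log (1 / q)) ⊆ Iio (logb (1 / q) ((n + c) / c)) :=
    hT ▸ Ico_subset_Iio_self
  have hK : 0 < k + (ne - k) * c / (n + c) := by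
    have : 0 ≤ ne - k := sub_nonneg.2 hkne
    positivity
  have hF : EqOn (fun t => (k + (ne - k) * c / (n + c)) * ((n + c) * q ^ t - c)⁻¹ + (ne - k) / (n + c))
      (fun t => ((ne - k) * q ^ t + k) / (n * q ^ t - c * (1 - q ^ t)))
      (Ico 0 (log (n * s / q + 1) / log (1 / q))) := fun t ht => by
    have := (mul_rpow_sub_pos hq0 hq1 hb hc (hsub ht)).ne'
    beta_reduce
    rw [show n * q ^ t - c * (1 - q ^ t) = (n + c) * q ^ t - c by ring]
    field_simp
    ring
  constructor
  · refine StrictMonoOn.congr (fun x hx y hy hxy => ?_) hF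
    have := (strictMonoOn_inv_mul_rpow_sub hq0 hq1 hb hc) (hsub hx) (hsub hy) hxy
    gcongr
  · exact (((convexOn_inv_mul_rpow_sub hq0 hq1 hb hc).subset hsub (convex_Ico _ _)).smul
      hK.le |>.add_const _).congr hF

/-- The approximate conditional SSS hitting probability
`p̃(t) = ((ne - k)(1-s)^t + k) / (n(1-s)^t - ((1-s)/s)(1-(1-s)^t))`
(real powers), viewed as a function of real `t ≥ 0`, is strictly increasing
and convex on `[0, t⁽²⁾)`, where
`t⁽²⁾ = log(ns/(1-s) + 1)/log(1/(1-s))` is where the denominator vanishes. -/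
theorem sss_conditional_prob_convex_increasing (s n k ne : ℝ)
    (hs : s ∈ Set.Ioo (0:ℝ) 1) (hn : 0 < n) (hk : 0 < k) (hkne : k ≤ ne) (hne : ne ≤ n) :
    StrictMonoOn
      (fun t : ℝ => ((ne - k) * (1 - s) ^ t + k) /
        (n * (1 - s) ^ t - ((1 - s) / s) * (1 - (1 - s) ^ t)))
      (Set.Ico (0:ℝ) (Real.log (n * s / (1 - s) + 1) / Real.log (1 / (1 - s))))
    ∧ ConvexOn ℝ
      (Set.Ico (0:ℝ) (Real.log (n * s / (1 - s) + 1) / Real.log (1 / (1 - s))))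
      (fun t : ℝ => ((ne - k) * (1 - s) ^ t + k) /
        (n * (1 - s) ^ t - ((1 - s) / s) * (1 - (1 - s) ^ t))) :=
  sss_conditional_prob_convex_increasing_general s n k ne hs hn hk hkne
end

section
/- With p̃_{t+1} as above, p̃_{t+1} = 1 exactly at t = t⁽¹⁾ = [log(s(n − n_e + n*) + (1−s)) − log((1−s) + n*·s)] / log(1/(1−s)), and t⁽¹⁾ < t⁽²⁾ = log(n·s/(1−s) + 1)/log(1/(1−s)). -/
/-- The approximate conditional SSS hitting probability equals 1 exactly at
`t⁽¹⁾ = [log(s(n - ne + k) + (1-s)) - log((1-s) + ks)] / log(1/(1-s))`,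
and `t⁽¹⁾ < t⁽²⁾ = log(ns/(1-s)+1)/log(1/(1-s))`. -/
theorem sss_conditional_prob_hits_one (s n k ne : ℝ)
    (hs : s ∈ Set.Ioo (0:ℝ) 1) (hn : 0 < n) (hk : 0 < k) (hkne : k ≤ ne) (hne : ne ≤ n) :
    (((ne - k) * (1 - s) ^ ((Real.log (s * (n - ne + k) + (1 - s)) -
          Real.log ((1 - s) + k * s)) / Real.log (1 / (1 - s))) + k) /
        (n * (1 - s) ^ ((Real.log (s * (n - ne + k) + (1 - s)) -
          Real.log ((1 - s) + k * s)) / Real.log (1 / (1 - s))) -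
          ((1 - s) / s) * (1 - (1 - s) ^ ((Real.log (s * (n - ne + k) + (1 - s)) -
            Real.log ((1 - s) + k * s)) / Real.log (1 / (1 - s)))))
      = 1)
    ∧ (Real.log (s * (n - ne + k) + (1 - s)) - Real.log ((1 - s) + k * s)) /
        Real.log (1 / (1 - s))
      < Real.log (n * s / (1 - s) + 1) / Real.log (1 / (1 - s)) := by
  obtain ⟨hs0, hs1⟩ := hs
  have h1s : (0:ℝ) < 1 - s := by linarith
  have hA : (0:ℝ) < s * (n - ne + k) + (1 - s) := by nlinarith
  have hB : (0:ℝ) < (1 - s) + k * s := by nlinarith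
  have hlogne : Real.log (1 - s) ≠ 0 :=
    ne_of_lt (Real.log_neg h1s (by linarith))
  have hlog : Real.log (1 / (1 - s)) = -Real.log (1 - s) := by
    rw [one_div, Real.log_inv]
  have hx : (1 - s) ^ ((Real.log (s * (n - ne + k) + (1 - s)) -
      Real.log ((1 - s) + k * s)) / Real.log (1 / (1 - s)))
      = ((1 - s) + k * s) / (s * (n - ne + k) + (1 - s)) := by
    rw [Real.rpow_def_of_pos h1s]
    have ht : Real.log (1 - s) * ((Real.log (s * (n - ne + k) + (1 - s)) -
        Real.log ((1 - s) + k * s)) / Real.log (1 / (1 - s)))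
        = Real.log ((1 - s) + k * s) - Real.log (s * (n - ne + k) + (1 - s)) := by
      rw [hlog, div_neg, mul_neg, mul_div_cancel₀ _ hlogne, neg_sub]
    rw [ht, Real.exp_sub, Real.exp_log hB, Real.exp_log hA]
  constructor
  · rw [hx]
    have hnum : (0:ℝ) < (ne - k) * (((1 - s) + k * s) / (s * (n - ne + k) + (1 - s))) + k := by
      have : (0:ℝ) ≤ (ne - k) * (((1 - s) + k * s) / (s * (n - ne + k) + (1 - s))) := by
        apply mul_nonneg (by linarith) (le_of_lt (div_pos hB hA))
      linarith
    have heq : n * (((1 - s) + k * s) / (s * (n - ne + k) + (1 - s))) -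
        ((1 - s) / s) * (1 - ((1 - s) + k * s) / (s * (n - ne + k) + (1 - s)))
        = (ne - k) * (((1 - s) + k * s) / (s * (n - ne + k) + (1 - s))) + k := by
      field_simp
      ring
    rw [heq, div_self (ne_of_gt hnum)]
  · have hL : 0 < Real.log (1 / (1 - s)) := by
      rw [hlog]
      have := Real.log_neg h1s (by linarith)
      linarith
    have hkey : Real.log (s * (n - ne + k) + (1 - s)) - Real.log ((1 - s) + k * s)
        < Real.log (n * s / (1 - s) + 1) := by
      rw [← Real.log_div hA.ne' hB.ne']
      apply Real.log_lt_log (div_pos hA hB)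
      rw [div_lt_iff₀ hB]
      have e : (n * s / (1 - s) + 1) * ((1 - s) + k * s)
          = (n * s + (1 - s)) * ((1 - s) + k * s) / (1 - s) := by
        field_simp
      rw [e, lt_div_iff₀ h1s]
      nlinarith [mul_pos (show (0:ℝ) < n * s + (1 - s) by nlinarith) (mul_pos hk hs0),
        mul_nonneg (mul_nonneg h1s.le hs0.le) (sub_nonneg.mpr hkne)]
    exact div_lt_div_of_pos_right hkey hL
end

section
/- Fix t ∈ ℕ, c > 0, n* ≥ 1, and set s(n) = c/n, n_e(n) = n − (1−c/n)^{n*}(n − n*). Then ε_{n,t} := (n(1−\bar s^t) + \bar s(1+\bar s(1−\bar s^t))/(s(1+\bar s)))·\bar s^t·((n_e−n*)\bar s^t + n*) / (n\bar s^t − (\bar s/s)(1−\bar s^t))³ (with \bar s = 1 − s(n)) tends to 0 as n → ∞; more generally, for fixed s ∈ (0,1) and t, ε_{n,t} = O(n_e/n²) → 0 as n → ∞. -/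
open Filter Asymptotics

set_option maxHeartbeats 1600000

private lemma sss_aux_cancel (u x y z w : ℝ) (hu : u ≠ 0) :
    x * y * (u ^ 2 * z) / (u * w) ^ 3 = u⁻¹ * x * y * z / w ^ 3 := by
  rcases eq_or_ne w 0 with h | h
  · simp [h]
  · field_simp

private lemma sss_aux_cancel2 (n p x y : ℝ) (hn : n ≠ 0) (hy : y ≠ 0) :
    n ^ 2 * p / (n * x) ^ 3 = p / (x ^ 3 * y) * ((n * y) / n ^ 2) := by
  rcases eq_or_ne x 0 with h | h
  · simp [h]
  · field_simp

/-- The Taylor-approximation error bound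
`ε_{n,t} = (n(1-s̄^t) + s̄(1+s̄(1-s̄^t))/(s(1+s̄)))·s̄^t·((ne-k)s̄^t + k) / (ns̄^t - (s̄/s)(1-s̄^t))³`
(with `s̄ = 1-s` and `ne = n - s̄^k(n-k)`) vanishes as `n → ∞` when `s = c/n`;
and, for fixed `s ∈ (0,1)`, `ε_{n,t} = O(ne/n²)` (hence it also tends to 0). -/
theorem sss_taylor_error_vanishes (t k : ℕ) (hk : 1 ≤ k) (c : ℝ) (hc : 0 < c) :
    (Tendsto (fun n : ℕ =>
        ((n : ℝ) * (1 - (1 - c / n) ^ t) +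
            (1 - c / n) * (1 + (1 - c / n) * (1 - (1 - c / n) ^ t)) /
              ((c / n) * (1 + (1 - c / n)))) *
          (1 - c / n) ^ t *
          ((((n : ℝ) - (1 - c / n) ^ k * ((n : ℝ) - k)) - k) * (1 - c / n) ^ t + k) /
          ((n : ℝ) * (1 - c / n) ^ t -
            ((1 - c / n) / (c / n)) * (1 - (1 - c / n) ^ t)) ^ 3)
      atTop (nhds 0))
    ∧ ∀ s : ℝ, s ∈ Set.Ioo (0:ℝ) 1 →
      (fun n : ℕ =>
        ((n : ℝ) * (1 - (1 - s) ^ t) +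
            (1 - s) * (1 + (1 - s) * (1 - (1 - s) ^ t)) / (s * (1 + (1 - s)))) *
          (1 - s) ^ t *
          ((((n : ℝ) - (1 - s) ^ k * ((n : ℝ) - k)) - k) * (1 - s) ^ t + k) /
          ((n : ℝ) * (1 - s) ^ t - ((1 - s) / s) * (1 - (1 - s) ^ t)) ^ 3)
      =O[atTop] (fun n : ℕ => ((n : ℝ) - (1 - s) ^ k * ((n : ℝ) - k)) / (n : ℝ) ^ 2) := by
  constructor
  · -- Part 1
    set F : ℝ → ℝ := fun u =>
      (c * (1 - (1 - u) ^ t) + (1 - u) * (1 + (1 - u) * (1 - (1 - u) ^ t)) / (2 - u)) *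
          (1 - u) ^ t *
          ((c * u - (k : ℝ) * u ^ 2) * (1 - (1 - u) ^ k) * (1 - u) ^ t + (k : ℝ) * u ^ 2) /
        (c * (1 - u) ^ t - (1 - u) * (1 - (1 - u) ^ t)) ^ 3 with hFdef
    have hF0 : F 0 = 0 := by simp [hFdef]
    have hFc : ContinuousAt F 0 := by
      rw [hFdef]
      apply ContinuousAt.div
      · apply ContinuousAt.mul
        apply ContinuousAt.mul
        · exact (continuousAt_const.mul (by fun_prop)).add
            (ContinuousAt.div (by fun_prop) (by fun_prop) (by norm_num))
        · fun_prop
        · fun_prop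
      · fun_prop
      · simp
        positivity
    have h1 : Tendsto (fun n : ℕ => c / (n:ℝ)) atTop (nhds 0) :=
      tendsto_const_div_atTop_nhds_zero_nat c
    have h2 : Tendsto (fun n : ℕ => F (c / n)) atTop (nhds 0) := by
      have h3 := hFc.tendsto.comp h1
      rwa [hF0] at h3
    refine h2.congr' ?_
    filter_upwards [eventually_ge_atTop (⌈c⌉₊ + 1)] with n hnn
    have h1n : c < (n:ℝ) := by
      have h2' := Nat.le_ceil c
      have h3 : ((⌈c⌉₊ + 1 : ℕ) : ℝ) ≤ n := Nat.cast_le.mpr hnn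
      push_cast at h3
      linarith
    have hn0 : (0:ℝ) < n := hc.trans h1n
    have hn : (n:ℝ) ≠ 0 := hn0.ne'
    have hc' : c ≠ 0 := hc.ne'
    have hu0 : c / (n:ℝ) ≠ 0 := (div_pos hc hn0).ne'
    have hu1 : c / (n:ℝ) < 1 := (div_lt_one hn0).mpr h1n
    have hupos := div_pos hc hn0
    have h2u : (2:ℝ) - c / n ≠ 0 := (by linarith : (0:ℝ) < 2 - c/n).ne'
    have h1u : (1:ℝ) + (1 - c/n) ≠ 0 := (by linarith : (0:ℝ) < 1 + (1 - c/n)).ne'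
    have h2nc : 2*(n:ℝ) - c ≠ 0 := by linarith
    show F (c / n) = _
    simp only [hFdef]
    have hB : (n : ℝ) * (1 - (1 - c / n) ^ t) +
          (1 - c / n) * (1 + (1 - c / n) * (1 - (1 - c / n) ^ t)) / ((c / n) * (1 + (1 - c / n)))
        = (c/n)⁻¹ * (c * (1 - (1 - c/n) ^ t) +
            (1 - c/n) * (1 + (1 - c/n) * (1 - (1 - c/n) ^ t)) / (2 - c/n)) := by
      have hrw : (c/(n:ℝ)) * (1 + (1 - c/n)) = (c * (2*n - c))/(n^2) := by
        field_simp; ring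
      have hrw2 : (2:ℝ) - c/n = (2*n - c)/n := by field_simp
      rw [inv_div, hrw, hrw2]
      field_simp
    have hT : (c * (c/n) - (k : ℝ) * (c/n) ^ 2) * (1 - (1 - c/n) ^ k) * (1 - c/n) ^ t + (k : ℝ) * (c/n) ^ 2
        = (c/n) ^ 2 * (((((n : ℝ) - (1 - c / n) ^ k * ((n : ℝ) - k)) - k) * (1 - c / n) ^ t + k)) := by
      field_simp
      ring
    have hD' : c * (1 - c/n) ^ t - (1 - c/n) * (1 - (1 - c/n) ^ t)
        = (c/n) * ((n : ℝ) * (1 - c / n) ^ t -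
            ((1 - c / n) / (c / n)) * (1 - (1 - c / n) ^ t)) := by
      field_simp
    rw [hB, hT, hD', sss_aux_cancel _ _ _ _ _ hu0]
  · -- Part 2
    intro s hs
    obtain ⟨hs0, hs1⟩ := hs
    have h1s : (0:ℝ) < 1 - s := by linarith
    have ha : (0:ℝ) < (1 - s) ^ t := pow_pos h1s t
    have hb : (0:ℝ) < (1 - s) ^ k := pow_pos h1s k
    have hb1 : (1 - s) ^ k < 1 := pow_lt_one₀ (le_of_lt h1s) (by linarith) (by omega)
    set G : ℝ → ℝ := fun u =>
      ((1 - (1 - s) ^ t) + ((1 - s) * (1 + (1 - s) * (1 - (1 - s) ^ t)) / (s * (1 + (1 - s)))) * u) *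
          (1 - s) ^ t *
          ((1 - (k : ℝ) * u) * (1 - (1 - s) ^ k) * (1 - s) ^ t + (k : ℝ) * u) /
        (((1 - s) ^ t - (1 - s) / s * (1 - (1 - s) ^ t) * u) ^ 3 *
          ((1 - (1 - s) ^ k) + (k : ℝ) * (1 - s) ^ k * u)) with hGdef
    have hGc : ContinuousAt G 0 := by
      rw [hGdef]
      apply ContinuousAt.div (by fun_prop) (by fun_prop)
      simp only [mul_zero, sub_zero, add_zero, ne_eq]
      exact (mul_pos (pow_pos ha 3) (by linarith)).ne'
    have hGt : Tendsto (fun n : ℕ => G (1 / (n:ℝ))) atTop (nhds (G 0)) :=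
      hGc.tendsto.comp tendsto_one_div_atTop_nhds_zero_nat
    have hO1 : (fun n : ℕ => G (1 / (n:ℝ))) =O[atTop] (fun _ : ℕ => (1 : ℝ)) :=
      hGt.isBigO_one ℝ
    have hOg : (fun n : ℕ => G (1 / (n:ℝ)) *
        (((n : ℝ) - (1 - s) ^ k * ((n : ℝ) - k)) / (n : ℝ) ^ 2)) =O[atTop]
        (fun n : ℕ => ((n : ℝ) - (1 - s) ^ k * ((n : ℝ) - k)) / (n : ℝ) ^ 2) := by
      simpa using hO1.mul (isBigO_refl (fun n : ℕ => ((n : ℝ) - (1 - s) ^ k * ((n : ℝ) - k)) / (n : ℝ) ^ 2) atTop)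
    refine hOg.congr' ?_ EventuallyEq.rfl
    -- eventual equality
    have hXt : Tendsto (fun n : ℕ => (1 - s) ^ t - (1 - s) / s * (1 - (1 - s) ^ t) * (1 / (n:ℝ)))
        atTop (nhds ((1 - s) ^ t)) := by
      have h := tendsto_one_div_atTop_nhds_zero_nat.const_mul ((1 - s) / s * (1 - (1 - s) ^ t))
      have h2 : Tendsto (fun n : ℕ => (1 - s) ^ t - (1 - s) / s * (1 - (1 - s) ^ t) * (1 / (n:ℝ)))
          atTop (nhds ((1 - s) ^ t - (1 - s) / s * (1 - (1 - s) ^ t) * 0)) :=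
        tendsto_const_nhds.sub h
      simpa using h2
    have hX : ∀ᶠ n : ℕ in atTop,
        0 < (1 - s) ^ t - (1 - s) / s * (1 - (1 - s) ^ t) * (1 / (n:ℝ)) :=
      hXt.eventually (eventually_gt_nhds ha)
    filter_upwards [hX, eventually_ge_atTop 1] with n hXn hn1
    have hn0 : (0:ℝ) < n := by exact_mod_cast Nat.lt_of_lt_of_le Nat.zero_lt_one hn1
    have hn : (n:ℝ) ≠ 0 := hn0.ne'
    have hY : (0:ℝ) < (1 - (1 - s) ^ k) + (k : ℝ) * (1 - s) ^ k * (1 / (n:ℝ)) := by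
      have h1 : (0:ℝ) ≤ (k : ℝ) * (1 - s) ^ k * (1 / (n:ℝ)) := by positivity
      linarith
    have hNP : ((n : ℝ) * (1 - (1 - s) ^ t) +
          (1 - s) * (1 + (1 - s) * (1 - (1 - s) ^ t)) / (s * (1 + (1 - s)))) *
            (1 - s) ^ t *
            ((((n : ℝ) - (1 - s) ^ k * ((n : ℝ) - k)) - k) * (1 - s) ^ t + k)
        = (n:ℝ) ^ 2 * (((1 - (1 - s) ^ t) +
            ((1 - s) * (1 + (1 - s) * (1 - (1 - s) ^ t)) / (s * (1 + (1 - s)))) * (1 / (n:ℝ))) *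
          (1 - s) ^ t *
          ((1 - (k : ℝ) * (1 / (n:ℝ))) * (1 - (1 - s) ^ k) * (1 - s) ^ t + (k : ℝ) * (1 / (n:ℝ)))) := by
      have h2s : (1:ℝ) + (1 - s) ≠ 0 := by linarith
      field_simp
      ring
    have hDX : (n : ℝ) * (1 - s) ^ t - ((1 - s) / s) * (1 - (1 - s) ^ t)
        = (n:ℝ) * ((1 - s) ^ t - (1 - s) / s * (1 - (1 - s) ^ t) * (1 / (n:ℝ))) := by
      field_simp
    have hneY : (n : ℝ) - (1 - s) ^ k * ((n : ℝ) - k)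
        = (n:ℝ) * ((1 - (1 - s) ^ k) + (k : ℝ) * (1 - s) ^ k * (1 / (n:ℝ))) := by
      field_simp
      ring
    show G (1 / (n:ℝ)) * _ = _
    simp only [hGdef]
    rw [hNP, hneY, hDX, sss_aux_cancel2 _ _ _ _ hn hY.ne']
end

section
/- Fix t ∈ ℕ, c > 0, and integer n* ≥ 1; set s(n) = c/n, \bar s(n) = 1 − c/n, and n_e(n) = n − \bar s(n)^{n*}(n − n*). Then the ratio p̃_t^{SSS}/p_t^{SSR} → 1 as n → ∞, where p_t^{SSR} = n_e(n)/n and p̃_t^{SSS} = ((n_e(n) − n*)·\bar s(n)^{t-1} + n*) / (n·\bar s(n)^{t-1} − (\bar s(n)/s(n))·(1 − \bar s(n)^{t-1})). -/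
open Filter

/-- With `s(n) = c/n`, `s̄ = 1 - c/n`, `ne(n) = n - s̄^k(n-k)`, the ratio of the
approximate SSS conditional hitting probability
`p̃_t = ((ne-k)s̄^{t-1} + k)/(ns̄^{t-1} - (s̄/s)(1-s̄^{t-1}))` to the SSR hitting
probability `p_t = ne/n` tends to 1 as `n → ∞`, for fixed `t ≥ 1`, `k ≥ 1`. -/
theorem sss_ssr_ratio_limit (t k : ℕ) (ht : 1 ≤ t) (hk : 1 ≤ k) (c : ℝ) (hc : 0 < c) :
    Filter.Tendsto (fun n : ℕ =>
      (((((n : ℝ) - (1 - c / n) ^ k * ((n : ℝ) - k)) - k) * (1 - c / n) ^ (t - 1) + k) /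
          ((n : ℝ) * (1 - c / n) ^ (t - 1) -
            ((1 - c / n) / (c / n)) * (1 - (1 - c / n) ^ (t - 1)))) /
        (((n : ℝ) - (1 - c / n) ^ k * ((n : ℝ) - k)) / n))
      Filter.atTop (nhds 1) := by
  have hc0 : c ≠ 0 := hc.ne'
  set m := t - 1 with hm
  have hs : Tendsto (fun n : ℕ => c / (n:ℝ)) atTop (nhds 0) :=
    tendsto_const_div_atTop_nhds_zero_nat c
  have hy : Tendsto (fun n : ℕ => 1 - c / (n:ℝ)) atTop (nhds 1) := by
    simpa using tendsto_const_nhds.sub hs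
  have hpow : ∀ j : ℕ, Tendsto (fun n : ℕ => (1 - c/(n:ℝ))^j) atTop (nhds 1) := by
    intro j; simpa using hy.pow j
  have hS : Tendsto (fun n : ℕ => ∑ i ∈ Finset.range k, (1 - c/(n:ℝ))^i) atTop
      (nhds (k:ℝ)) := by
    have := tendsto_finset_sum (Finset.range k) (fun i _ => hpow i)
    simpa using this
  -- C(n) = ne(n)
  have hCeq : ∀ᶠ n : ℕ in atTop,
      ((n:ℝ) - (1 - c/n)^k * ((n:ℝ) - k)) =
        c * (∑ i ∈ Finset.range k, (1 - c/(n:ℝ))^i) + k * (1 - c/(n:ℝ))^k := by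
    filter_upwards [eventually_ge_atTop 1] with n hn
    have hn0 : (n:ℝ) ≠ 0 := by positivity
    have h1 : (∑ i ∈ Finset.range k, (1 - c/(n:ℝ))^i) * ((1 - c/(n:ℝ)) - 1)
        = (1 - c/(n:ℝ))^k - 1 := geom_sum_mul _ _
    field_simp at h1 ⊢
    nlinarith [h1]
  have hC : Tendsto (fun n : ℕ => ((n:ℝ) - (1 - c/n)^k * ((n:ℝ) - k))) atTop
      (nhds ((k:ℝ) * (1 + c))) := by
    refine Tendsto.congr' (Filter.EventuallyEq.symm hCeq) ?_
    have := (hS.const_mul c).add ((hpow k).const_mul (k:ℝ))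
    convert this using 2
    ring
  have hk0 : ((k:ℝ) * (1 + c)) ≠ 0 := by
    have : (1:ℝ) ≤ (k:ℝ) := by exact_mod_cast hk
    positivity
  have hA : Tendsto (fun n : ℕ =>
      ((((n:ℝ) - (1 - c/n)^k * ((n:ℝ) - k)) - k) * (1 - c/(n:ℝ))^m + k)) atTop
      (nhds ((k:ℝ) * (1 + c))) := by
    have := ((hC.sub (tendsto_const_nhds (x := (k:ℝ)))).mul (hpow m)).add
      (tendsto_const_nhds (x := (k:ℝ)))
    convert this using 2
    ring
  -- B(n)/n
  have hBeq : ∀ᶠ n : ℕ in atTop,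
      ((n:ℝ) * (1 - c/n)^m - ((1 - c/n)/(c/n)) * (1 - (1 - c/n)^m)) / n =
        (1 - c/(n:ℝ))^m - ((1 - c/(n:ℝ))/c) * (1 - (1 - c/(n:ℝ))^m) := by
    filter_upwards [eventually_ge_atTop 1] with n hn
    have hn0 : (n:ℝ) ≠ 0 := by positivity
    field_simp
  have hB : Tendsto (fun n : ℕ =>
      ((n:ℝ) * (1 - c/n)^m - ((1 - c/n)/(c/n)) * (1 - (1 - c/n)^m)) / n) atTop
      (nhds 1) := by
    refine Tendsto.congr' (Filter.EventuallyEq.symm hBeq) ?_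
    have h2 : Tendsto (fun n : ℕ => (1 - c/(n:ℝ))/c) atTop (nhds (1/c)) := hy.div_const c
    have h3 : Tendsto (fun n : ℕ => (1 - (1 - c/(n:ℝ))^m)) atTop (nhds 0) := by
      simpa using (tendsto_const_nhds (x := (1:ℝ))).sub (hpow m)
    have := (hpow m).sub (h2.mul h3)
    simpa using this
  -- assemble
  have key : ∀ n : ℕ,
      (((((n : ℝ) - (1 - c / n) ^ k * ((n : ℝ) - k)) - k) * (1 - c / n) ^ m + k) /
          ((n : ℝ) * (1 - c / n) ^ m -
            ((1 - c / n) / (c / n)) * (1 - (1 - c / n) ^ m))) /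
        (((n : ℝ) - (1 - c / n) ^ k * ((n : ℝ) - k)) / n)
      = (((((n:ℝ) - (1 - c/n)^k * ((n:ℝ) - k)) - k) * (1 - c/(n:ℝ))^m + k) /
          ((n:ℝ) - (1 - c/n)^k * ((n:ℝ) - k))) *
        (((n:ℝ) * (1 - c/n)^m - ((1 - c/n)/(c/n)) * (1 - (1 - c/n)^m)) / n)⁻¹ := by
    intro n
    rw [div_div_div_comm]
    ring
  have hfinal := (hA.div hC hk0).mul (hB.inv₀ one_ne_zero)
  rw [div_self hk0] at hfinal
  simpa [key] using hfinal
end
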